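/- For λ ∈ ℂ, the automorphism group of the 3-dimensional algebra T³₀₁(λ) over ℂ (basis e₁,e₂,e₃ with nonzero products e₁e₁ = e₂, e₁e₂ = λe₃, e₂e₁ = e₃) consists exactly of the linear maps whose matrix in the basis (e₁,e₂,e₃) has the form [[x,0,0],[y,x²,0],[z,(λ+1)xy,x³]] with x ≠ 0. -/

import Mathlib

/-- T³₀₁(λ): basis `e₁,e₂,e₃`, nonzero products `e₁e₁ = e₂`, `e₁e₂ = λe₃`, `e₂e₁ = e₃`. -/
def mulT301 (lam : ℂ) (a b : Fin 3 → ℂ) : Fin 3 → ℂ :=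
  (a 0 * b 0) • (Pi.single 1 1 : Fin 3 → ℂ)
    + (lam * (a 0 * b 1) + a 1 * b 0) • (Pi.single 2 1 : Fin 3 → ℂ)

/-! Since `e₂ = e₁e₁` and `e₃ = e₂e₁`, an automorphism is determined by the image `v` of `e₁`,
which forces `φ e₂ = v v` and `φ e₃ = (v v) v`; conversely these values make `φ` multiplicative,
as a coordinate computation shows. `Pi.single i 1` is `e_{i+1}` (coordinates are numbered from `0`). -/

theorem eq_smul_single_add_smul_single_add_smul_single {R : Type*} [Semiring R] (v : Fin 3 → R) :
    v = v 0 • (Pi.single 0 1 : Fin 3 → R) + v 1 • (Pi.single 1 1 : Fin 3 → R)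
      + v 2 • (Pi.single 2 1 : Fin 3 → R) := by
  funext i; fin_cases i <;> simp

theorem map_fin_three {R M F : Type*} [Semiring R] [AddCommMonoid M] [Module R M]
    [FunLike F (Fin 3 → R) M] [LinearMapClass F R (Fin 3 → R) M] (f : F) (a : Fin 3 → R) :
    f a = a 0 • f (Pi.single 0 1) + a 1 • f (Pi.single 1 1) + a 2 • f (Pi.single 2 1) := by
  conv_lhs => rw [eq_smul_single_add_smul_single_add_smul_single a]
  simp only [map_add, map_smul]

theorem mulT301_self (lam : ℂ) (v : Fin 3 → ℂ) :
    mulT301 lam v v = (v 0 ^ 2) • (Pi.single 1 1 : Fin 3 → ℂ)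
      + ((lam + 1) * v 0 * v 1) • (Pi.single 2 1 : Fin 3 → ℂ) := by
  simp only [mulT301]; congr 2 <;> ring

theorem mulT301_of_apply_zero_eq_zero (lam : ℂ) {a : Fin 3 → ℂ} (ha : a 0 = 0) (b : Fin 3 → ℂ) :
    mulT301 lam a b = (a 1 * b 0) • (Pi.single 2 1 : Fin 3 → ℂ) := by
  simp [mulT301, ha]

theorem mulT301_single_zero_single_zero (lam : ℂ) :
    mulT301 lam (Pi.single 0 1) (Pi.single 0 1) = Pi.single 1 1 := by
  simp [mulT301_self]

theorem mulT301_single_one_single_zero (lam : ℂ) :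
    mulT301 lam (Pi.single 1 1) (Pi.single 0 1) = Pi.single 2 1 := by
  simp [mulT301_of_apply_zero_eq_zero]

/-- The automorphisms of T³₀₁(λ) are exactly the linear bijections with matrix
`[[x,0,0],[y,x²,0],[z,(λ+1)xy,x³]]` with `x ≠ 0`. -/
theorem stmt14 (lam : ℂ) (φ : (Fin 3 → ℂ) ≃ₗ[ℂ] (Fin 3 → ℂ)) :
    (∀ a b, φ (mulT301 lam a b) = mulT301 lam (φ a) (φ b)) ↔
    ∃ x y z : ℂ, x ≠ 0 ∧
      φ (Pi.single 0 1) = x • (Pi.single 0 1 : Fin 3 → ℂ) + y • (Pi.single 1 1 : Fin 3 → ℂ)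
        + z • (Pi.single 2 1 : Fin 3 → ℂ) ∧
      φ (Pi.single 1 1) = (x ^ 2) • (Pi.single 1 1 : Fin 3 → ℂ)
        + ((lam + 1) * x * y) • (Pi.single 2 1 : Fin 3 → ℂ) ∧
      φ (Pi.single 2 1) = (x ^ 3) • (Pi.single 2 1 : Fin 3 → ℂ) := by
  constructor
  · intro h
    set v := φ (Pi.single 0 1)
    have h1 : φ (Pi.single 1 1) = (v 0 ^ 2) • (Pi.single 1 1 : Fin 3 → ℂ)
        + ((lam + 1) * v 0 * v 1) • (Pi.single 2 1 : Fin 3 → ℂ) :=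
      calc φ (Pi.single 1 1)
          = φ (mulT301 lam (Pi.single 0 1) (Pi.single 0 1)) := by
            rw [mulT301_single_zero_single_zero]
        _ = mulT301 lam v v := h _ _
        _ = _ := mulT301_self lam v
    have h2 : φ (Pi.single 2 1) = (v 0 ^ 3) • (Pi.single 2 1 : Fin 3 → ℂ) :=
      calc φ (Pi.single 2 1)
          = φ (mulT301 lam (Pi.single 1 1) (Pi.single 0 1)) := by
            rw [mulT301_single_one_single_zero]
        _ = mulT301 lam (φ (Pi.single 1 1)) v := h _ _
        _ = _ := by
            rw [h1, mulT301_of_apply_zero_eq_zero lam (by simp)]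
            congr 1
            simp only [Pi.add_apply, Pi.smul_apply, Pi.single_eq_same, smul_eq_mul, mul_one, ne_eq,
              Fin.reduceEq, not_false_eq_true, Pi.single_eq_of_ne, mul_zero, add_zero]
            ring
    refine ⟨v 0, v 1, v 2, ?_, eq_smul_single_add_smul_single_add_smul_single v, h1, h2⟩
    rintro hv
    have : φ (Pi.single 1 1) ≠ 0 := φ.map_ne_zero_iff.mpr (by simp)
    exact this (by simp [h1, hv])
  · rintro ⟨x, y, z, -, h0, h1, h2⟩ a b
    rw [map_fin_three φ (mulT301 lam a b), map_fin_three φ a, map_fin_three φ b, h0, h1, h2]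
    funext i; fin_cases i <;> simp [mulT301] <;> ring
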